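/- Let K : ℤ^d → ℝ satisfy |K(i)| ≤ C₁ e^{−C₂|i|} for some C₁, C₂ > 0 and set κ₁ = ( 2 Σ_{i≠0} |K(i)| )^{−1}. For every 0 ≤ κ < κ₁ there exists ρ > 1 such that sup_{i∈ℤ^d} Σ_{k∈ℤ^d, k≠i} ρ^{|i−k|} tanh( 2κ |K(i−k)| ) < 1. In particular, since the Dobrushin influence coefficients C_{ki} of the Random Field Ising Model with pair interaction κK satisfy C_{ki} ≤ tanh(2κ|K(i−k)|), the RFIM lies inside Dobrushin's uniqueness region for every realization of the external fields whenever κ < κ₁. -/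

import Mathlib

open Real

noncomputable section

abbrev Site (d : ℕ) := Fin d → ℤ

/-- Euclidean norm of a lattice site. -/
def siteNorm {d : ℕ} (i : Site d) : ℝ := Real.sqrt (∑ k, ((i k : ℝ)) ^ 2)

lemma siteNorm_nonneg {d : ℕ} (i : Site d) : 0 ≤ siteNorm i := Real.sqrt_nonneg _

lemma aux_sinh_le_mul_cosh {x : ℝ} (hx : 0 ≤ x) : Real.sinh x ≤ x * Real.cosh x := by
  have hmono : MonotoneOn (fun y : ℝ => y * Real.cosh y - Real.sinh y) (Set.Ici 0) := by
    apply monotoneOn_of_deriv_nonneg (convex_Ici 0)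
    · exact (Continuous.continuousOn (by fun_prop))
    · exact (Differentiable.differentiableOn (by fun_prop))
    · intro y hy
      have h : HasDerivAt (fun y : ℝ => y * Real.cosh y - Real.sinh y)
          (1 * Real.cosh y + y * Real.sinh y - Real.cosh y) y :=
        ((hasDerivAt_id y).mul (Real.hasDerivAt_cosh y)).sub (Real.hasDerivAt_sinh y)
      rw [h.deriv]
      rw [interior_Ici] at hy
      have hy' : 0 ≤ y := le_of_lt hy
      have := Real.sinh_nonneg_iff.mpr hy'
      nlinarith
  have h0 : (0:ℝ) ∈ Set.Ici (0:ℝ) := Set.self_mem_Ici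
  have := hmono h0 (Set.mem_Ici.mpr hx) hx
  simpa using this

lemma aux_tanh_le_self {x : ℝ} (hx : 0 ≤ x) : Real.tanh x ≤ x := by
  rw [Real.tanh_eq_sinh_div_cosh, div_le_iff₀ (Real.cosh_pos x)]
  exact aux_sinh_le_mul_cosh hx

lemma aux_tanh_nonneg {x : ℝ} (hx : 0 ≤ x) : 0 ≤ Real.tanh x := by
  rw [Real.tanh_eq_sinh_div_cosh]
  exact div_nonneg (Real.sinh_nonneg_iff.mpr hx) (Real.cosh_pos x).le

lemma aux_summable_int_exp {c : ℝ} (hc : 0 < c) :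
    Summable (fun z : ℤ => Real.exp (-c * |(z : ℝ)|)) := by
  have hnat : Summable (fun n : ℕ => Real.exp (-c) ^ n) :=
    summable_geometric_of_lt_one (Real.exp_nonneg _)
      (Real.exp_lt_one_iff.mpr (by linarith))
  apply Summable.of_nat_of_neg
  · refine hnat.congr fun n => ?_
    rw [← Real.exp_nat_mul]
    push_cast
    rw [abs_of_nonneg (by positivity : (0:ℝ) ≤ (n:ℝ))]
    ring_nf
  · refine hnat.congr fun n => ?_
    rw [← Real.exp_nat_mul]
    push_cast
    rw [abs_neg, abs_of_nonneg (by positivity : (0:ℝ) ≤ (n:ℝ))]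
    ring_nf

lemma aux_summable_pi_exp : ∀ (n : ℕ) {c : ℝ}, 0 < c →
    Summable (fun j : Fin n → ℤ => Real.exp (-c * ∑ k, |((j k : ℤ) : ℝ)|)) := by
  intro n
  induction n with
  | zero => intro c _; exact Summable.of_finite
  | succ n ih =>
    intro c hc
    apply (Equiv.summable_iff (Fin.consEquiv (fun _ : Fin (n+1) => ℤ))).mp
    have key : ∀ p : ℤ × (Fin n → ℤ),
        ((fun j : Fin (n+1) → ℤ => Real.exp (-c * ∑ k, |((j k : ℤ) : ℝ)|)) ∘
          (Fin.consEquiv (fun _ : Fin (n+1) => ℤ))) p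
        = Real.exp (-c * |((p.1 : ℤ) : ℝ)|) * Real.exp (-c * ∑ k, |((p.2 k : ℤ) : ℝ)|) := by
      intro p
      simp only [Function.comp_apply, Fin.consEquiv, Equiv.coe_fn_mk,
        Fin.sum_univ_succ, Fin.cons_zero, Fin.cons_succ]
      rw [← Real.exp_add]
      ring_nf
    exact (Summable.mul_of_nonneg (aux_summable_int_exp hc) (ih hc)
      (fun z => (Real.exp_pos _).le) (fun g => (Real.exp_pos _).le)).congr
      (fun p => (key p).symm)

lemma aux_abs_le_siteNorm {d : ℕ} (j : Site d) (k : Fin d) :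
    |((j k : ℤ) : ℝ)| ≤ siteNorm j := by
  rw [siteNorm, ← Real.sqrt_sq_eq_abs]
  exact Real.sqrt_le_sqrt (Finset.single_le_sum (f := fun m => ((j m : ℤ) : ℝ) ^ 2)
    (fun m _ => sq_nonneg _) (Finset.mem_univ k))

lemma aux_summable_exp_siteNorm {d : ℕ} (hd : 1 ≤ d) {c : ℝ} (hc : 0 < c) :
    Summable (fun j : Site d => Real.exp (-c * siteNorm j)) := by
  have hd0 : (0:ℝ) < (d:ℝ) := by exact_mod_cast Nat.lt_of_lt_of_le Nat.zero_lt_one hd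
  have hcd : 0 < c / d := div_pos hc hd0
  refine Summable.of_nonneg_of_le (fun j => (Real.exp_pos _).le) (fun j => ?_)
    (aux_summable_pi_exp d hcd)
  apply Real.exp_le_exp.mpr
  have hsum : ∑ k, |((j k : ℤ) : ℝ)| ≤ (d : ℝ) * siteNorm j := by
    calc ∑ k, |((j k : ℤ) : ℝ)| ≤ ∑ _k : Fin d, siteNorm j :=
          Finset.sum_le_sum fun k _ => aux_abs_le_siteNorm j k
      _ = (d : ℝ) * siteNorm j := by simp [Finset.sum_const, nsmul_eq_mul]
  have h2 : c / d * (∑ k, |((j k : ℤ) : ℝ)|) ≤ c / d * ((d : ℝ) * siteNorm j) :=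
    mul_le_mul_of_nonneg_left hsum hcd.le
  have h3 : c / d * ((d : ℝ) * siteNorm j) = c * siteNorm j := by
    field_simp
  rw [h3] at h2
  linarith

lemma aux_summable_norm_exp_siteNorm {d : ℕ} (hd : 1 ≤ d) {c : ℝ} (hc : 0 < c) :
    Summable (fun j : Site d => siteNorm j * Real.exp (-c * siteNorm j)) := by
  have h2 := (aux_summable_exp_siteNorm hd (half_pos hc)).mul_left (2 / c)
  refine Summable.of_nonneg_of_le
    (fun j => mul_nonneg (siteNorm_nonneg j) (Real.exp_pos _).le) (fun j => ?_) h2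
  set x := siteNorm j with hxdef
  have hx : 0 ≤ x := siteNorm_nonneg j
  have h1 : c / 2 * x ≤ Real.exp (c / 2 * x) := by
    have := Real.add_one_le_exp (c / 2 * x); linarith
  have hprod : Real.exp (c / 2 * x) * Real.exp (-c * x) = Real.exp (-(c/2) * x) := by
    rw [← Real.exp_add]; ring_nf
  have hmul := mul_le_mul_of_nonneg_right h1 (Real.exp_pos (-c * x)).le
  rw [hprod] at hmul
  -- hmul : c/2 * x * exp (-c*x) ≤ exp (-(c/2)*x)
  have hc2 : 0 < 2 / c := by positivity
  calc x * Real.exp (-c * x) = (2/c) * (c/2 * x * Real.exp (-c * x)) := by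
        field_simp
    _ ≤ 2/c * Real.exp (-(c/2) * x) := by
        exact mul_le_mul_of_nonneg_left hmul hc2.le

/-- Let `K` decay exponentially and set `κ₁ = (2 Σ_{i≠0} |K i|)⁻¹`. For
every `0 ≤ κ < κ₁` there exists `ρ > 1` with
`sup_i Σ_{k≠i} ρ^{|i-k|} tanh (2κ|K(i-k)|) < 1`; in particular, any family of Dobrushin
influence coefficients `C k i ≤ tanh (2κ|K(i-k)|)` of the RFIM (for an arbitrary
realization of the external fields) satisfies the Dobrushin uniqueness criterion
`sup_i Σ_{k≠i} ρ^{|i-k|} C k i < 1`. -/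
theorem dobrushin_uniqueness_criterion
    (d : ℕ) (hd : 1 ≤ d) (K : Site d → ℝ) (C₁ C₂ : ℝ) (hC₁ : 0 < C₁) (hC₂ : 0 < C₂)
    (hK : ∀ i : Site d, |K i| ≤ C₁ * Real.exp (-C₂ * siteNorm i))
    (κ : ℝ) (hκ0 : 0 ≤ κ)
    (hκ1 : κ < (2 * ∑' i : {i : Site d // i ≠ 0}, |K i.1|)⁻¹) :
    ∃ ρ > (1 : ℝ), ∃ c < (1 : ℝ),
      (∀ i : Site d,
        ∑' k : {k : Site d // k ≠ i}, ρ ^ siteNorm (i - k.1) * Real.tanh (2 * κ * |K (i - k.1)|)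
          ≤ c) ∧
      ∀ C : Site d → Site d → ℝ,
        (∀ k i : Site d, 0 ≤ C k i ∧ C k i ≤ Real.tanh (2 * κ * |K (i - k)|)) →
        ∀ i : Site d,
          ∑' k : {k : Site d // k ≠ i}, ρ ^ siteNorm (i - k.1) * C k.1 i ≤ c := by
  set S : ℝ := ∑' i : {i : Site d // i ≠ 0}, |K i.1| with hSdef
  have hKsum : Summable (fun j : Site d => |K j|) :=
    Summable.of_nonneg_of_le (fun j => abs_nonneg _) hK
      ((aux_summable_exp_siteNorm hd hC₂).mul_left C₁)
  have hS : Summable (fun i : {i : Site d // i ≠ 0} => |K i.1|) :=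
    hKsum.subtype _
  have hSnn : 0 ≤ S := tsum_nonneg (fun i => abs_nonneg _)
  have h2κS : 2 * κ * S < 1 := by
    rcases eq_or_lt_of_le hSnn with h | h
    · rw [← h]; norm_num
    · have h2S : 0 < 2 * S := by linarith
      calc 2 * κ * S = κ * (2 * S) := by ring
        _ < (2 * S)⁻¹ * (2 * S) := mul_lt_mul_of_pos_right hκ1 h2S
        _ = 1 := inv_mul_cancel₀ (ne_of_gt h2S)
  set U : ℝ := ∑' j : Site d, siteNorm j * Real.exp (-(C₂/2) * siteNorm j) with hUdef
  have hUsum : Summable (fun j : Site d => siteNorm j * Real.exp (-(C₂/2) * siteNorm j)) :=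
    aux_summable_norm_exp_siteNorm hd (half_pos hC₂)
  have hUnn : 0 ≤ U :=
    tsum_nonneg (fun j => mul_nonneg (siteNorm_nonneg j) (Real.exp_pos _).le)
  set A : ℝ := 2 * κ * C₁ * U with hAdef
  have hAnn : 0 ≤ A := by positivity
  set δ : ℝ := min (C₂ / 2) ((1 - 2 * κ * S) / (A + 1)) with hδdef
  have hδpos : 0 < δ :=
    lt_min (half_pos hC₂) (div_pos (by linarith) (by linarith))
  have hδle : δ ≤ C₂ / 2 := min_le_left _ _
  have hδ2 : δ * (A + 1) ≤ 1 - 2 * κ * S := by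
    have h := min_le_right (C₂ / 2) ((1 - 2 * κ * S) / (A + 1))
    rw [le_div_iff₀ (by linarith : (0:ℝ) < A + 1)] at h
    exact h
  set c : ℝ := 2 * κ * S + A * δ with hcdef
  have hc1 : c < 1 := by nlinarith
  have hcnn : 0 ≤ c := by positivity
  -- the key bound
  have main : ∀ (i : Site d) (f : {k : Site d // k ≠ i} → ℝ),
      (∀ k, 0 ≤ f k) → (∀ k, f k ≤ Real.tanh (2 * κ * |K (i - k.1)|)) →
      ∑' k : {k : Site d // k ≠ i}, (Real.exp δ) ^ siteNorm (i - k.1) * f k ≤ c := by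
    intro i f hf0 hf1
    apply tsum_le_of_sum_le' hcnn
    intro s
    -- per-term bound
    have hterm : ∀ k : {k : Site d // k ≠ i},
        (Real.exp δ) ^ siteNorm (i - k.1) * f k ≤
          2 * κ * |K (i - k.1)| +
          2 * κ * C₁ * δ * (siteNorm (i - k.1) * Real.exp (-(C₂/2) * siteNorm (i - k.1))) := by
      intro k
      set x := siteNorm (i - k.1) with hxdef
      have hx : 0 ≤ x := siteNorm_nonneg _
      have hKnn : (0:ℝ) ≤ 2 * κ * |K (i - k.1)| := by positivity
      have ht : f k ≤ 2 * κ * |K (i - k.1)| :=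
        le_trans (hf1 k) (aux_tanh_le_self hKnn)
      have hρx : (Real.exp δ) ^ x = Real.exp (δ * x) := by
        rw [Real.rpow_def_of_pos (Real.exp_pos δ), Real.log_exp]
      have hδx : 0 ≤ δ * x := mul_nonneg hδpos.le hx
      have hexp1 : (1:ℝ) ≤ Real.exp (δ * x) := by
        have := Real.add_one_le_exp (δ * x); linarith
      have e1 : Real.exp (δ * x) - 1 ≤ δ * x * Real.exp (δ * x) := by
        have h := Real.add_one_le_exp (-(δ * x))
        have hee : Real.exp (-(δ * x)) * Real.exp (δ * x) = 1 := by
          rw [← Real.exp_add]; simp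
        nlinarith [Real.exp_pos (δ * x)]
      have e2 : Real.exp (δ * x) * Real.exp (-C₂ * x) = Real.exp ((δ - C₂) * x) := by
        rw [← Real.exp_add]; ring_nf
      have e3 : Real.exp ((δ - C₂) * x) ≤ Real.exp (-(C₂/2) * x) :=
        Real.exp_le_exp.mpr (by nlinarith)
      have hKb : |K (i - k.1)| ≤ C₁ * Real.exp (-C₂ * x) := hK _
      calc (Real.exp δ) ^ x * f k = Real.exp (δ * x) * f k := by rw [hρx]
        _ ≤ Real.exp (δ * x) * (2 * κ * |K (i - k.1)|) :=
            mul_le_mul_of_nonneg_left ht (Real.exp_pos _).le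
        _ = 2 * κ * |K (i - k.1)| + (Real.exp (δ * x) - 1) * (2 * κ * |K (i - k.1)|) := by
            ring
        _ ≤ 2 * κ * |K (i - k.1)| +
            (δ * x * Real.exp (δ * x)) * (2 * κ * (C₁ * Real.exp (-C₂ * x))) := by
            have hb1 : (Real.exp (δ * x) - 1) * (2 * κ * |K (i - k.1)|) ≤
                (δ * x * Real.exp (δ * x)) * (2 * κ * (C₁ * Real.exp (-C₂ * x))) := by
              apply mul_le_mul e1 _ hKnn (by positivity)
              have : (0:ℝ) ≤ 2 * κ := by positivity
              calc 2 * κ * |K (i - k.1)| ≤ 2 * κ * (C₁ * Real.exp (-C₂ * x)) :=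
                mul_le_mul_of_nonneg_left hKb this
              _ = 2 * κ * (C₁ * Real.exp (-C₂ * x)) := rfl
            linarith
        _ = 2 * κ * |K (i - k.1)| +
            2 * κ * C₁ * δ * (x * (Real.exp (δ * x) * Real.exp (-C₂ * x))) := by ring
        _ = 2 * κ * |K (i - k.1)| +
            2 * κ * C₁ * δ * (x * Real.exp ((δ - C₂) * x)) := by rw [e2]
        _ ≤ 2 * κ * |K (i - k.1)| +
            2 * κ * C₁ * δ * (x * Real.exp (-(C₂/2) * x)) := by
            have h4 : x * Real.exp ((δ - C₂) * x) ≤ x * Real.exp (-(C₂/2) * x) :=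
              mul_le_mul_of_nonneg_left e3 hx
            have hB : (0:ℝ) ≤ 2 * κ * C₁ * δ := by positivity
            have := mul_le_mul_of_nonneg_left h4 hB
            linarith
    -- embeddings
    have hinj : Function.Injective (fun k : {k : Site d // k ≠ i} => i - k.1) := by
      intro a b h
      exact Subtype.ext (by simpa using sub_right_injective h)
    let em : {k : Site d // k ≠ i} ↪ Site d := ⟨fun k => i - k.1, hinj⟩
    let em₀ : {k : Site d // k ≠ i} ↪ {j : Site d // j ≠ 0} :=
      ⟨fun k => ⟨i - k.1, sub_ne_zero.mpr (Ne.symm k.2)⟩, by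
        intro a b h
        exact Subtype.ext (by simpa using sub_right_injective (congrArg Subtype.val h))⟩
    have hsum1 : ∑ k ∈ s, |K (i - k.1)| ≤ S := by
      have : ∑ k ∈ s, |K (i - k.1)| = ∑ j ∈ s.map em₀, |K j.1| := by
        rw [Finset.sum_map]; rfl
      rw [this]
      exact Summable.sum_le_tsum _ (fun _ _ => abs_nonneg _) hS
    have hsum2 : ∑ k ∈ s, siteNorm (i - k.1) * Real.exp (-(C₂/2) * siteNorm (i - k.1)) ≤ U := by
      have : ∑ k ∈ s, siteNorm (i - k.1) * Real.exp (-(C₂/2) * siteNorm (i - k.1))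
          = ∑ j ∈ s.map em, siteNorm j * Real.exp (-(C₂/2) * siteNorm j) := by
        rw [Finset.sum_map]; rfl
      rw [this]
      exact Summable.sum_le_tsum _
        (fun j _ => mul_nonneg (siteNorm_nonneg j) (Real.exp_pos _).le) hUsum
    calc ∑ k ∈ s, (Real.exp δ) ^ siteNorm (i - k.1) * f k
        ≤ ∑ k ∈ s, (2 * κ * |K (i - k.1)| +
            2 * κ * C₁ * δ * (siteNorm (i - k.1) * Real.exp (-(C₂/2) * siteNorm (i - k.1)))) :=
          Finset.sum_le_sum fun k _ => hterm k
      _ = 2 * κ * (∑ k ∈ s, |K (i - k.1)|) +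
          2 * κ * C₁ * δ * (∑ k ∈ s, siteNorm (i - k.1) *
            Real.exp (-(C₂/2) * siteNorm (i - k.1))) := by
          rw [Finset.sum_add_distrib, ← Finset.mul_sum, ← Finset.mul_sum]
      _ ≤ 2 * κ * S + 2 * κ * C₁ * δ * U := by
          have h1 : 2 * κ * (∑ k ∈ s, |K (i - k.1)|) ≤ 2 * κ * S :=
            mul_le_mul_of_nonneg_left hsum1 (by positivity)
          have h2 : 2 * κ * C₁ * δ * (∑ k ∈ s, siteNorm (i - k.1) *
              Real.exp (-(C₂/2) * siteNorm (i - k.1))) ≤ 2 * κ * C₁ * δ * U :=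
            mul_le_mul_of_nonneg_left hsum2 (by positivity)
          linarith
      _ = c := by rw [hcdef, hAdef]; ring
  refine ⟨Real.exp δ, ?_, c, hc1, ?_, ?_⟩
  · exact Real.one_lt_exp_iff.mpr hδpos
  · intro i
    exact main i (fun k => Real.tanh (2 * κ * |K (i - k.1)|))
      (fun k => aux_tanh_nonneg (by positivity)) (fun k => le_refl _)
  · intro C hC i
    exact main i (fun k => C k.1 i) (fun k => (hC k.1 i).1) (fun k => (hC k.1 i).2)
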